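/- arXiv:1405.2962 — 8 statements merged into one kernel-verified Lean document; each statement's English description precedes it below -/
import Mathlib

section
/- Let f be a concave function and g a positive convex function on a convex compact set Q, with max_Q f ≥ 0. Then q* maximizes the ratio f/g over Q if and only if q* maximizes f(q) − π*·g(q) over Q, where π* = f(q*)/g(q*); moreover the maximum of f(q) − π*·g(q) over Q equals 0. -/
/-! Since `g > 0` on `Q`, `f q / g q ≤ π` is equivalent to `f q - π * g q ≤ 0` for every `q ∈ Q`,
and for `π* = f q* / g q*` the function `f - π* g` vanishes at `q*`. Hence both sides of the
equivalence say that `f - π* g ≤ 0` on `Q`, and then `0` is its maximum, attained at `q*`. -/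

theorem div_le_iff_sub_mul_nonpos {a b c : ℝ} (hb : 0 < b) : a / b ≤ c ↔ a - c * b ≤ 0 := by
  rw [sub_nonpos, div_le_iff₀ hb]

theorem forall_div_le_iff_forall_sub_mul_nonpos {α : Type*} {Q : Set α} {f g : α → ℝ}
    (hg : ∀ q ∈ Q, 0 < g q) (π : ℝ) :
    (∀ q ∈ Q, f q / g q ≤ π) ↔ ∀ q ∈ Q, f q - π * g q ≤ 0 :=
  forall₂_congr fun q hq => div_le_iff_sub_mul_nonpos (hg q hq)

theorem stmt_4_general (n : ℕ) (Q : Set (Fin n → ℝ))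
    (f g : (Fin n → ℝ) → ℝ)
    (hgpos : ∀ q ∈ Q, 0 < g q)
    (qs : Fin n → ℝ) (hqs : qs ∈ Q) :
    ((∀ q ∈ Q, f q / g q ≤ f qs / g qs) ↔
      (∀ q ∈ Q, f q - (f qs / g qs) * g q ≤ f qs - (f qs / g qs) * g qs)) ∧
    ((∀ q ∈ Q, f q / g q ≤ f qs / g qs) →
      IsGreatest ((fun q => f q - (f qs / g qs) * g q) '' Q) 0) := by
  have hzero : f qs - f qs / g qs * g qs = 0 := by
    rw [div_mul_cancel₀ _ (hgpos qs hqs).ne', sub_self]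
  have key := forall_div_le_iff_forall_sub_mul_nonpos (f := f) hgpos (f qs / g qs)
  refine ⟨by rw [hzero, key], fun hmax => ⟨⟨qs, hqs, hzero⟩, ?_⟩⟩
  rintro _ ⟨q, hq, rfl⟩
  exact key.mp hmax q hq

/-- Dinkelbach characterization: `q*` maximizes `f/g` over `Q` iff it maximizes
`f − π* g` over `Q` with `π* = f(q*)/g(q*)`, and in that case the maximum of
`f − π* g` over `Q` equals `0`. -/
theorem stmt_4 (n : ℕ) (Q : Set (Fin n → ℝ)) (hQne : Q.Nonempty)
    (hQconv : Convex ℝ Q) (hQcomp : IsCompact Q)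
    (f g : (Fin n → ℝ) → ℝ)
    (hf : ConcaveOn ℝ Q f) (hg : ConvexOn ℝ Q g)
    (hgpos : ∀ q ∈ Q, 0 < g q)
    (hfmax : ∃ q ∈ Q, 0 ≤ f q)
    (qs : Fin n → ℝ) (hqs : qs ∈ Q) :
    ((∀ q ∈ Q, f q / g q ≤ f qs / g qs) ↔
      (∀ q ∈ Q, f q - (f qs / g qs) * g q ≤ f qs - (f qs / g qs) * g qs)) ∧
    ((∀ q ∈ Q, f q / g q ≤ f qs / g qs) →
      IsGreatest ((fun q => f q - (f qs / g qs) * g q) '' Q) 0) :=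
  stmt_4_general n Q f g hgpos qs hqs
end

section
/- In the Dinkelbach procedure, the function F(π) = max_{q ∈ Q} [f(q) − π·g(q)] is convex, strictly decreasing in π (given g > 0 on the compact set Q), and has a unique zero π*, which equals the maximum value of f/g over Q. -/
/-- In the Dinkelbach procedure, `F(π) = max_{q ∈ Q} (f(q) − π g(q))` is convex
and strictly decreasing, and has a unique zero `π*`, which equals the maximum
value of `f/g` over `Q`. -/
theorem stmt_5 (n : ℕ) (Q : Set (Fin n → ℝ)) (hQne : Q.Nonempty)
    (hQconv : Convex ℝ Q) (hQcomp : IsCompact Q)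
    (f g : (Fin n → ℝ) → ℝ)
    (hfc : ContinuousOn f Q) (hgc : ContinuousOn g Q)
    (hf : ConcaveOn ℝ Q f) (hg : ConvexOn ℝ Q g)
    (hgpos : ∀ q ∈ Q, 0 < g q) :
    ConvexOn ℝ Set.univ (fun π : ℝ => sSup ((fun q => f q - π * g q) '' Q)) ∧
    StrictAnti (fun π : ℝ => sSup ((fun q => f q - π * g q) '' Q)) ∧
    (∃! πs : ℝ, sSup ((fun q => f q - πs * g q) '' Q) = 0) ∧
    (∀ πs : ℝ, sSup ((fun q => f q - πs * g q) '' Q) = 0 →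
      IsGreatest ((fun q => f q / g q) '' Q) πs) := by
  have hcont : ∀ π : ℝ, ContinuousOn (fun q => f q - π * g q) Q :=
    fun π => hfc.sub (continuousOn_const.mul hgc)
  have key : ∀ π : ℝ, ∃ q ∈ Q,
      IsGreatest ((fun q => f q - π * g q) '' Q) (f q - π * g q) := by
    intro π
    obtain ⟨q, hq, hmax⟩ := hQcomp.exists_isMaxOn hQne (hcont π)
    refine ⟨q, hq, Set.mem_image_of_mem _ hq, ?_⟩
    rintro y ⟨q', hq', rfl⟩
    exact hmax hq'
  have hsup : ∀ π : ℝ, ∀ q ∈ Q,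
      f q - π * g q ≤ sSup ((fun q => f q - π * g q) '' Q) := by
    intro π q hq
    obtain ⟨q0, hq0, hg0⟩ := key π
    rw [hg0.csSup_eq]
    exact hg0.2 (Set.mem_image_of_mem _ hq)
  have hanti : StrictAnti (fun π : ℝ => sSup ((fun q => f q - π * g q) '' Q)) := by
    intro x y hxy
    obtain ⟨q, hq, hgy⟩ := key y
    calc sSup ((fun q => f q - y * g q) '' Q) = f q - y * g q := hgy.csSup_eq
      _ < f q - x * g q := by
          have := mul_lt_mul_of_pos_right hxy (hgpos q hq)
          linarith
      _ ≤ sSup ((fun q => f q - x * g q) '' Q) := hsup x q hq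
  have hlast : ∀ π : ℝ, sSup ((fun q => f q - π * g q) '' Q) = 0 →
      IsGreatest ((fun q => f q / g q) '' Q) π := by
    intro π hπ
    obtain ⟨q0, hq0, hg0⟩ := key π
    have h0 : f q0 - π * g q0 = 0 := by rw [← hg0.csSup_eq]; exact hπ
    constructor
    · refine ⟨q0, hq0, ?_⟩
      rw [div_eq_iff (hgpos q0 hq0).ne']
      linarith
    · rintro y ⟨q, hq, rfl⟩
      have h1 : f q - π * g q ≤ 0 := by
        have := hsup π q hq; rw [hπ] at this; linarith
      rw [div_le_iff₀ (hgpos q hq)]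
      linarith
  refine ⟨⟨convex_univ, ?_⟩, hanti, ?_, hlast⟩
  · intro x _ y _ a b ha hb hab
    simp only [smul_eq_mul]
    obtain ⟨q, hq, hg0⟩ := key (a * x + b * y)
    rw [hg0.csSup_eq]
    have heq : f q - (a * x + b * y) * g q
        = a * (f q - x * g q) + b * (f q - y * g q) := by
      linear_combination (-(f q)) * hab
    rw [heq]
    have h1 := hsup x q hq
    have h2 := hsup y q hq
    have := mul_le_mul_of_nonneg_left h1 ha
    have := mul_le_mul_of_nonneg_left h2 hb
    linarith
  · obtain ⟨qs, hqs, hmax⟩ := hQcomp.exists_isMaxOn hQne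
      (hfc.div hgc fun q hq => (hgpos q hq).ne')
    have hzero : sSup ((fun q => f q - (f qs / g qs) * g q) '' Q) = 0 := by
      apply IsGreatest.csSup_eq
      constructor
      · refine ⟨qs, hqs, ?_⟩
        dsimp only
        rw [div_mul_cancel₀ _ (hgpos qs hqs).ne', sub_self]
      · rintro y ⟨q, hq, rfl⟩
        have hle : f q / g q ≤ f qs / g qs := hmax hq
        rw [div_le_div_iff₀ (hgpos q hq) (hgpos qs hqs)] at hle
        have hq0 := (hgpos q hq)
        have hqs0 := (hgpos qs hqs)
        have : f q ≤ f qs / g qs * g q := by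
          rw [div_mul_eq_mul_div, le_div_iff₀ hqs0]
          linarith
        linarith
    exact ⟨f qs / g qs, hzero, fun y hy => hanti.injective (hy.trans hzero.symm)⟩
end

section
/- The function u(x) = log₂(1+ax)/(x+c), with constants a > 0 and c > 0, is strictly pseudo-concave on [0,∞), attains its maximum at a unique point x̄ > 0, and is concave on the interval [0, x̄]. -/
/-!
Up to the positive factor `log 2 * (x + c)²`, the derivative of `u` is
`g x = a (x + c) / (1 + a x) - log (1 + a x)`, whose own derivative
`-a² (x + c) / (1 + a x)²` is negative. So `g` decreases strictly from `g 0 = a c > 0` to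
negative values and has a single zero `x̄ > 0`: `u` increases strictly on `[0, x̄]` and decreases
strictly on `[x̄, ∞)`, which gives the strict pseudo-concavity and the unique maximiser.
On `[0, x̄]` the derivative `g / (log 2 (x + c)²)` is a nonnegative decreasing function over an
increasing positive one, hence decreasing, and `u` is concave there.
Here `u` is `logbRatio a c` and `g` is `logbRatioDerivNum a c`.
-/

open Set Real

def StrictPseudoConcaveOn (s : Set ℝ) (u : ℝ → ℝ) : Prop :=
  ∀ x ∈ s, ∀ y ∈ s, x ≠ y → deriv u x * (y - x) ≤ 0 → u y < u x

section SinglePeak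

variable {s : Set ℝ} {u : ℝ → ℝ} {m : ℝ}

theorem strictMonoOn_inter_Iic_of_deriv_pos (hs : Convex ℝ s) (hu : ContinuousOn u s)
    (hpos : ∀ x ∈ s, x < m → 0 < deriv u x) : StrictMonoOn u (s ∩ Iic m) := by
  refine strictMonoOn_of_deriv_pos (hs.inter (convex_Iic m)) (hu.mono inter_subset_left)
    fun x hx => ?_
  rw [interior_inter, interior_Iic] at hx
  exact hpos x (interior_subset hx.1) hx.2

theorem strictAntiOn_inter_Ici_of_deriv_neg (hs : Convex ℝ s) (hu : ContinuousOn u s)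
    (hneg : ∀ x ∈ s, m < x → deriv u x < 0) : StrictAntiOn u (s ∩ Ici m) := by
  refine strictAntiOn_of_deriv_neg (hs.inter (convex_Ici m)) (hu.mono inter_subset_left)
    fun x hx => ?_
  rw [interior_inter, interior_Ici] at hx
  exact hneg x (interior_subset hx.1) hx.2

theorem lt_of_deriv_sign (hs : Convex ℝ s) (hu : ContinuousOn u s)
    (hpos : ∀ x ∈ s, x < m → 0 < deriv u x) (hneg : ∀ x ∈ s, m < x → deriv u x < 0)
    (hm : m ∈ s) {y : ℝ} (hy : y ∈ s) (hne : y ≠ m) : u y < u m := by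
  rcases hne.lt_or_gt with hym | hmy
  · exact strictMonoOn_inter_Iic_of_deriv_pos hs hu hpos ⟨hy, hym.le⟩ ⟨hm, self_mem_Iic⟩ hym
  · exact strictAntiOn_inter_Ici_of_deriv_neg hs hu hneg ⟨hm, self_mem_Ici⟩ ⟨hy, hmy.le⟩ hmy

theorem strictPseudoConcaveOn_of_deriv_sign (hs : Convex ℝ s) (hu : ContinuousOn u s)
    (hpos : ∀ x ∈ s, x < m → 0 < deriv u x) (hneg : ∀ x ∈ s, m < x → deriv u x < 0)
    (hm : m ∈ s) : StrictPseudoConcaveOn s u := by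
  intro x hx y hy hne hd
  rcases lt_trichotomy x m with hxm | rfl | hmx
  · have hyx : y < x :=
      (sub_nonpos.mp (nonpos_of_mul_nonpos_right hd (hpos x hx hxm))).lt_of_ne hne.symm
    exact strictMonoOn_inter_Iic_of_deriv_pos hs hu hpos ⟨hy, (hyx.trans hxm).le⟩ ⟨hx, hxm.le⟩
      hyx
  · exact lt_of_deriv_sign hs hu hpos hneg hm hy hne.symm
  · have hxy : x < y :=
      (sub_nonneg.mp (nonneg_of_mul_nonpos_right hd (hneg x hx hmx))).lt_of_ne hne
    exact strictAntiOn_inter_Ici_of_deriv_neg hs hu hneg ⟨hx, hmx.le⟩ ⟨hy, (hmx.trans hxy).le⟩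
      hxy

end SinglePeak

noncomputable def logbRatio (a c t : ℝ) : ℝ := logb 2 (1 + a * t) / (t + c)

noncomputable def logbRatioDerivNum (a c t : ℝ) : ℝ :=
  a * (t + c) / (1 + a * t) - log (1 + a * t)

section LogbRatio

variable {a c x : ℝ}

theorem hasDerivAt_logbRatio (h₁ : 1 + a * x ≠ 0) (h₂ : x + c ≠ 0) :
    HasDerivAt (logbRatio a c) (logbRatioDerivNum a c x / (log 2 * (x + c) ^ 2)) x := by
  have hlin : HasDerivAt (fun t => 1 + a * t) a x := by
    simpa using ((hasDerivAt_id x).const_mul a).const_add 1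
  have hnum : HasDerivAt (fun t => logb 2 (1 + a * t)) ((1 + a * x)⁻¹ * a / log 2) x :=
    ((hasDerivAt_log h₁).comp x hlin).div_const _
  refine (hnum.div ((hasDerivAt_id x).add_const c) h₂).congr_deriv ?_
  simp only [logbRatioDerivNum, logb, id]
  field_simp

theorem hasDerivAt_logbRatioDerivNum (h₁ : 1 + a * x ≠ 0) :
    HasDerivAt (logbRatioDerivNum a c) (-(a ^ 2 * (x + c)) / (1 + a * x) ^ 2) x := by
  have hlin : HasDerivAt (fun t => 1 + a * t) a x := by
    simpa using ((hasDerivAt_id x).const_mul a).const_add 1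
  have hnum : HasDerivAt (fun t => a * (t + c)) a x := by
    simpa using ((hasDerivAt_id x).add_const c).const_mul a
  refine ((hnum.div hlin h₁).sub ((hasDerivAt_log h₁).comp x hlin)).congr_deriv ?_
  field_simp
  ring

theorem one_add_mul_pos (ha : 0 ≤ a) (hx : 0 ≤ x) : 0 < 1 + a * x := by positivity

theorem deriv_logbRatio (ha : 0 ≤ a) (hc : 0 < c) (hx : 0 ≤ x) :
    deriv (logbRatio a c) x = logbRatioDerivNum a c x / (log 2 * (x + c) ^ 2) :=
  (hasDerivAt_logbRatio (one_add_mul_pos ha hx).ne' (by positivity)).deriv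

theorem continuousOn_logbRatio (ha : 0 ≤ a) (hc : 0 < c) : ContinuousOn (logbRatio a c) (Ici 0) :=
  fun _ hx => (hasDerivAt_logbRatio (one_add_mul_pos ha hx).ne'
    (add_pos_of_nonneg_of_pos hx hc).ne').continuousAt.continuousWithinAt

theorem strictAntiOn_logbRatioDerivNum (ha : 0 < a) (hc : 0 ≤ c) :
    StrictAntiOn (logbRatioDerivNum a c) (Ici 0) := by
  refine strictAntiOn_of_deriv_neg (convex_Ici 0) (fun x hx => ?_) fun x hx => ?_
  · exact (hasDerivAt_logbRatioDerivNum (one_add_mul_pos ha.le hx).ne').continuousAt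
      |>.continuousWithinAt
  · rw [interior_Ici] at hx
    have h₁ := one_add_mul_pos ha.le hx.out.le
    rw [(hasDerivAt_logbRatioDerivNum h₁.ne').deriv]
    have : 0 < a ^ 2 * (x + c) := by have := hx.out; positivity
    exact div_neg_of_neg_of_pos (neg_neg_of_pos this) (by positivity)

theorem logbRatioDerivNum_exp_sub_one_div_neg (ha : 0 < a) (hc : 0 ≤ c) :
    logbRatioDerivNum a c ((exp (2 + a * c) - 1) / a) < 0 := by
  set x := (exp (2 + a * c) - 1) / a
  have hexp : 1 + a * x = exp (2 + a * c) := by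
    simp only [x]
    field_simp
    ring
  have hx : 0 ≤ x := div_nonneg (sub_nonneg.mpr (one_le_exp (by positivity))) ha.le
  -- `a (x + c) = (1 + a x) + (a c - 1)` and `1 + a x ≥ 1`
  have hquot : a * (x + c) / (1 + a * x) ≤ 1 + a * c := by
    rw [div_le_iff₀ (one_add_mul_pos ha.le hx)]
    nlinarith [mul_nonneg (mul_nonneg ha.le hc) (mul_nonneg ha.le hx)]
  rw [logbRatioDerivNum, hexp, log_exp, ← hexp]
  linarith

theorem exists_logbRatioDerivNum_eq_zero (ha : 0 < a) (hc : 0 < c) :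
    ∃ m, 0 < m ∧ logbRatioDerivNum a c m = 0 := by
  have hb : 0 ≤ (exp (2 + a * c) - 1) / a :=
    div_nonneg (sub_nonneg.mpr (one_le_exp (by positivity))) ha.le
  have hcont : ContinuousOn (logbRatioDerivNum a c) (Icc 0 ((exp (2 + a * c) - 1) / a)) :=
    fun x hx => (hasDerivAt_logbRatioDerivNum (one_add_mul_pos ha.le hx.1).ne').continuousAt
      |>.continuousWithinAt
  have hzero : logbRatioDerivNum a c 0 = a * c := by simp [logbRatioDerivNum]
  obtain ⟨m, hm, hgm⟩ := intermediate_value_Ioo' hb hcont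
    ⟨logbRatioDerivNum_exp_sub_one_div_neg ha hc.le, hzero ▸ mul_pos ha hc⟩
  exact ⟨m, hm.1, hgm⟩

variable {m : ℝ}

theorem logbRatioDerivNum_pos (ha : 0 < a) (hc : 0 ≤ c) (hm : logbRatioDerivNum a c m = 0)
    (hx : 0 ≤ x) (hxm : x < m) : 0 < logbRatioDerivNum a c x :=
  hm ▸ strictAntiOn_logbRatioDerivNum ha hc hx (hx.trans hxm.le) hxm

theorem logbRatioDerivNum_neg (ha : 0 < a) (hc : 0 ≤ c) (hm₀ : 0 ≤ m)
    (hm : logbRatioDerivNum a c m = 0) (hmx : m < x) : logbRatioDerivNum a c x < 0 :=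
  hm ▸ strictAntiOn_logbRatioDerivNum ha hc hm₀ (hm₀.trans hmx.le) hmx

theorem deriv_logbRatio_pos (ha : 0 < a) (hc : 0 < c) (hm : logbRatioDerivNum a c m = 0)
    (hx : 0 ≤ x) (hxm : x < m) : 0 < deriv (logbRatio a c) x := by
  rw [deriv_logbRatio ha.le hc hx]
  exact div_pos (logbRatioDerivNum_pos ha hc.le hm hx hxm) (by positivity)

theorem deriv_logbRatio_neg (ha : 0 < a) (hc : 0 < c) (hm₀ : 0 ≤ m)
    (hm : logbRatioDerivNum a c m = 0) (hmx : m < x) : deriv (logbRatio a c) x < 0 := by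
  have hx : 0 ≤ x := hm₀.trans hmx.le
  rw [deriv_logbRatio ha.le hc hx]
  exact div_neg_of_neg_of_pos (logbRatioDerivNum_neg ha hc.le hm₀ hm hmx) (by positivity)

theorem concaveOn_logbRatio (ha : 0 < a) (hc : 0 < c) (hm : logbRatioDerivNum a c m = 0) :
    ConcaveOn ℝ (Icc 0 m) (logbRatio a c) := by
  refine AntitoneOn.concaveOn_of_deriv (convex_Icc 0 m)
    ((continuousOn_logbRatio ha.le hc).mono Icc_subset_Ici_self) ?_ ?_ <;> rw [interior_Icc]
  · intro x hx
    exact (hasDerivAt_logbRatio (one_add_mul_pos ha.le hx.1.le).ne'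
      (add_pos hx.1 hc).ne').differentiableAt.differentiableWithinAt
  · rintro x ⟨hx₀, hxm⟩ y ⟨hy₀, -⟩ hxy
    rw [deriv_logbRatio ha.le hc hx₀.le, deriv_logbRatio ha.le hc hy₀.le]
    have hgxy : logbRatioDerivNum a c y ≤ logbRatioDerivNum a c x :=
      (strictAntiOn_logbRatioDerivNum ha hc.le).antitoneOn hx₀.le hy₀.le hxy
    have hden : log 2 * (x + c) ^ 2 ≤ log 2 * (y + c) ^ 2 := by gcongr
    exact div_le_div₀ (logbRatioDerivNum_pos ha hc.le hm hx₀.le hxm).le hgxy (by positivity)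
      hden

end LogbRatio

/-- Lemma 2 of the paper: `u(x) = log₂(1+ax)/(x+c)` with `a, c > 0` is strictly
pseudo-concave on `[0,∞)`, attains its maximum at a unique point `x̄ > 0`, and
is concave on `[0, x̄]`. -/
theorem stmt_6 (a c : ℝ) (ha : 0 < a) (hc : 0 < c) :
    (∀ x ∈ Set.Ici (0 : ℝ), ∀ y ∈ Set.Ici (0 : ℝ), x ≠ y →
      deriv (fun t => Real.logb 2 (1 + a * t) / (t + c)) x * (y - x) ≤ 0 →
      Real.logb 2 (1 + a * y) / (y + c) < Real.logb 2 (1 + a * x) / (x + c)) ∧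
    (∃ xb : ℝ, 0 < xb ∧
      IsMaxOn (fun t => Real.logb 2 (1 + a * t) / (t + c)) (Set.Ici 0) xb ∧
      ConcaveOn ℝ (Set.Icc 0 xb) (fun t => Real.logb 2 (1 + a * t) / (t + c)) ∧
      (∀ y ∈ Set.Ici (0 : ℝ),
        IsMaxOn (fun t => Real.logb 2 (1 + a * t) / (t + c)) (Set.Ici 0) y →
        y = xb)) := by
  obtain ⟨m, hm₀, hm⟩ := exists_logbRatioDerivNum_eq_zero ha hc
  have hcont := continuousOn_logbRatio ha.le hc
  have hpos : ∀ x ∈ Ici (0 : ℝ), x < m → 0 < deriv (logbRatio a c) x :=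
    fun _ hx => deriv_logbRatio_pos ha hc hm hx
  have hneg : ∀ x ∈ Ici (0 : ℝ), m < x → deriv (logbRatio a c) x < 0 :=
    fun _ _ => deriv_logbRatio_neg ha hc hm₀.le hm
  have hlt : ∀ y ∈ Ici (0 : ℝ), y ≠ m → logbRatio a c y < logbRatio a c m :=
    fun _ hy => lt_of_deriv_sign (convex_Ici 0) hcont hpos hneg hm₀.le hy
  refine ⟨strictPseudoConcaveOn_of_deriv_sign (convex_Ici 0) hcont hpos hneg hm₀.le, m, hm₀,
    isMaxOn_iff.mpr fun y hy => ?_, concaveOn_logbRatio ha hc hm, fun y hy hmax => ?_⟩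
  · rcases eq_or_ne y m with rfl | hne
    · exact le_rfl
    · exact (hlt y hy hne).le
  · by_contra hne
    exact (hmax hm₀.le).not_gt (hlt y hy hne)
end

section
/- For a > 0, c > 0, every x ≥ 0 with u''(x) ≤ 0 (where u(x) = log₂(1+ax)/(x+c)) satisfies a(x+c)/(1+ax) + a²(x+c)²/(2(1+ax)²) ≥ ln(1+ax); in particular, this inequality holds for all x in [0, x̄], where x̄ is the unique maximizer of u on [0,∞). -/
/-! Up to the positive factor `(1+ax)(x+c)² ln 2`, the slope of `u` is
`φ(x) = a(x+c) - (1+ax) ln(1+ax)`, and a direct computation gives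
`u''(x) = -2 G(x) / ((x+c)³ ln 2)` with `G` the difference of the two sides of the inequality;
so `u''(x) ≤ 0` is exactly `G(x) ≥ 0`. Since `φ' = -a ln(1+ax) ≤ 0` and `φ(x̄) ≥ 0`
(`φ(0) = ac` if `x̄ = 0`, and `u'(x̄) = 0` otherwise), `φ ≥ 0` on `[0, x̄]`, i.e.
`a(x+c)/(1+ax) ≥ ln(1+ax)` there. -/

open Real Filter Topology Set

noncomputable section

namespace LogRatio

def logRatio (a c t : ℝ) : ℝ := logb 2 (1 + a * t) / (t + c)

def slopeNum (a c t : ℝ) : ℝ := a * (t + c) - (1 + a * t) * log (1 + a * t)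

def concavityGap (a c t : ℝ) : ℝ :=
  a * (t + c) / (1 + a * t) + a ^ 2 * (t + c) ^ 2 / (2 * (1 + a * t) ^ 2) - log (1 + a * t)

variable {a c x : ℝ}

lemma hasDerivAt_one_add_mul (a x : ℝ) : HasDerivAt (fun t : ℝ => 1 + a * t) a x := by
  simpa using ((hasDerivAt_id x).const_mul a).const_add 1

lemma hasDerivAt_log_one_add_mul (hA : 1 + a * x ≠ 0) :
    HasDerivAt (fun t => log (1 + a * t)) (a / (1 + a * x)) x :=
  (hasDerivAt_one_add_mul a x).log hA

lemma hasDerivAt_slopeNum (hA : 1 + a * x ≠ 0) :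
    HasDerivAt (slopeNum a c) (-(a * log (1 + a * x))) x := by
  have hlin : HasDerivAt (fun t : ℝ => a * (t + c)) a x := by
    simpa using ((hasDerivAt_id x).add_const c).const_mul a
  refine (hlin.sub ((hasDerivAt_one_add_mul a x).mul (hasDerivAt_log_one_add_mul hA))).congr_deriv ?_
  field_simp
  ring

lemma hasDerivAt_logRatio (hA : 1 + a * x ≠ 0) (hD : x + c ≠ 0) :
    HasDerivAt (logRatio a c) (slopeNum a c x / ((1 + a * x) * (x + c) ^ 2 * log 2)) x := by
  have h := ((hasDerivAt_log_one_add_mul hA).div_const (log 2)).div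
    ((hasDerivAt_id x).add_const c) hD
  refine (h.congr_deriv ?_).congr_of_eventuallyEq (Eventually.of_forall fun t => ?_)
  · simp only [slopeNum, id]
    field_simp
  · simp [logRatio, logb]

lemma deriv_logRatio_eventuallyEq (hA : 0 < 1 + a * x) (hD : 0 < x + c) :
    deriv (logRatio a c) =ᶠ[𝓝 x]
      fun t => slopeNum a c t / ((1 + a * t) * (t + c) ^ 2 * log 2) := by
  have hA' : ∀ᶠ t in 𝓝 x, 0 < 1 + a * t :=
    (isOpen_lt continuous_const (by fun_prop)).mem_nhds hA
  have hD' : ∀ᶠ t in 𝓝 x, 0 < t + c :=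
    (isOpen_lt continuous_const (by fun_prop)).mem_nhds hD
  filter_upwards [hA', hD'] with t hAt hDt
  exact (hasDerivAt_logRatio hAt.ne' hDt.ne').deriv

lemma deriv_deriv_logRatio (hA : 0 < 1 + a * x) (hD : 0 < x + c) :
    deriv (deriv (logRatio a c)) x = -2 * concavityGap a c x / ((x + c) ^ 3 * log 2) := by
  have hden : HasDerivAt (fun t => (1 + a * t) * (t + c) ^ 2 * log 2)
      ((a * (x + c) ^ 2 + (1 + a * x) * (2 * (x + c))) * log 2) x := by
    have := (((hasDerivAt_one_add_mul a x).mul (((hasDerivAt_id x).add_const c).pow 2)).mul_const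
      (log 2))
    refine this.congr_deriv ?_
    simp
  have hquot : HasDerivAt (fun t => slopeNum a c t / ((1 + a * t) * (t + c) ^ 2 * log 2)) _ x :=
    (hasDerivAt_slopeNum hA.ne').div hden (by positivity)
  rw [(deriv_logRatio_eventuallyEq hA hD).deriv_eq, hquot.deriv]
  simp only [slopeNum, concavityGap]
  field_simp
  ring

lemma concavityGap_nonneg_of_deriv_deriv_nonpos (hA : 0 < 1 + a * x) (hD : 0 < x + c)
    (h : deriv (deriv (logRatio a c)) x ≤ 0) : 0 ≤ concavityGap a c x := by
  rw [deriv_deriv_logRatio hA hD, div_nonpos_iff] at h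
  have hpos : 0 < (x + c) ^ 3 * log 2 := by positivity
  rcases h with ⟨-, h⟩ | ⟨h, -⟩ <;> linarith

lemma slopeNum_antitoneOn (ha : 0 ≤ a) : AntitoneOn (slopeNum a c) (Ici 0) := by
  have hA : ∀ t ∈ Ici (0 : ℝ), 0 < 1 + a * t := fun t ht =>
    by nlinarith [mem_Ici.mp ht]
  have hderiv : ∀ t ∈ Ici (0 : ℝ), HasDerivAt (slopeNum a c) (-(a * log (1 + a * t))) t :=
    fun t ht => hasDerivAt_slopeNum (hA t ht).ne'
  refine antitoneOn_of_deriv_nonpos (convex_Ici 0)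
    (fun t ht => (hderiv t ht).continuousAt.continuousWithinAt)
    (fun t ht => (hderiv t (interior_subset ht)).differentiableAt.differentiableWithinAt)
    fun t ht => ?_
  rw [(hderiv t (interior_subset ht)).deriv, neg_nonpos]
  exact mul_nonneg ha (log_nonneg (by nlinarith [mem_Ici.mp (interior_subset ht)]))

lemma slopeNum_nonneg_of_isMaxOn (ha : 0 < a) (hc : 0 < c) {xb : ℝ} (hxb : 0 ≤ xb)
    (hmax : IsMaxOn (logRatio a c) (Ici 0) xb) : 0 ≤ slopeNum a c xb := by
  rcases hxb.eq_or_lt with rfl | hpos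
  · simp only [slopeNum, zero_add, mul_zero, add_zero, log_one, sub_zero]
    positivity
  · have hA : 0 < 1 + a * xb := by positivity
    have hzero := (hmax.isLocalMax (Ici_mem_nhds hpos)).hasDerivAt_eq_zero
      (hasDerivAt_logRatio hA.ne' (by positivity))
    rw [div_eq_zero_iff] at hzero
    rcases hzero with h | h
    · exact h.ge
    · exact absurd h (by positivity)

lemma log_le_of_slopeNum_nonneg (hA : 0 < 1 + a * x) (h : 0 ≤ slopeNum a c x) :
    log (1 + a * x) ≤ a * (x + c) / (1 + a * x) := by
  rw [le_div_iff₀ hA]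
  unfold slopeNum at h
  linarith

end LogRatio

end

open LogRatio in
theorem stmt_8_general (a c : ℝ) (ha : 0 < a) (hc : 0 < c) (xb : ℝ)
    (hxb : xb ∈ Set.Ici (0 : ℝ))
    (hmax : IsMaxOn (fun t => Real.logb 2 (1 + a * t) / (t + c)) (Set.Ici 0) xb) :
    (∀ x : ℝ, 0 ≤ x →
      deriv (deriv (fun t => Real.logb 2 (1 + a * t) / (t + c))) x ≤ 0 →
      a * (x + c) / (1 + a * x) + a ^ 2 * (x + c) ^ 2 / (2 * (1 + a * x) ^ 2) ≥
        Real.log (1 + a * x)) ∧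
    (∀ x : ℝ, 0 ≤ x → x ≤ xb →
      a * (x + c) / (1 + a * x) + a ^ 2 * (x + c) ^ 2 / (2 * (1 + a * x) ^ 2) ≥
        Real.log (1 + a * x)) := by
  refine ⟨fun x hx h => ?_, fun x hx hxxb => ?_⟩
  · have hgap : 0 ≤ concavityGap a c x :=
      concavityGap_nonneg_of_deriv_deriv_nonpos (by positivity) (by positivity) h
    unfold concavityGap at hgap
    linarith
  · have hslope : 0 ≤ slopeNum a c x :=
      (slopeNum_nonneg_of_isMaxOn ha hc hxb hmax).trans
        (slopeNum_antitoneOn ha.le hx hxb hxxb)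
    have hlog := log_le_of_slopeNum_nonneg (by positivity) hslope
    have hsq : 0 ≤ a ^ 2 * (x + c) ^ 2 / (2 * (1 + a * x) ^ 2) := by positivity
    linarith

/-- Second-derivative characterization in the proof of Lemma 2: every `x ≥ 0`
with `u''(x) ≤ 0` (where `u(x) = log₂(1+ax)/(x+c)`) satisfies
`a(x+c)/(1+ax) + a²(x+c)²/(2(1+ax)²) ≥ ln(1+ax)`; in particular this inequality
holds for all `x ∈ [0, x̄]`, `x̄` being the unique maximizer of `u` on `[0,∞)`. -/
theorem stmt_8 (a c : ℝ) (ha : 0 < a) (hc : 0 < c) (xb : ℝ)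
    (hxb : xb ∈ Set.Ici (0 : ℝ))
    (hmax : IsMaxOn (fun t => Real.logb 2 (1 + a * t) / (t + c)) (Set.Ici 0) xb)
    (huniq : ∀ y ∈ Set.Ici (0 : ℝ),
      IsMaxOn (fun t => Real.logb 2 (1 + a * t) / (t + c)) (Set.Ici 0) y →
      y = xb) :
    (∀ x : ℝ, 0 ≤ x →
      deriv (deriv (fun t => Real.logb 2 (1 + a * t) / (t + c))) x ≤ 0 →
      a * (x + c) / (1 + a * x) + a ^ 2 * (x + c) ^ 2 / (2 * (1 + a * x) ^ 2) ≥
        Real.log (1 + a * x)) ∧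
    (∀ x : ℝ, 0 ≤ x → x ≤ xb →
      a * (x + c) / (1 + a * x) + a ^ 2 * (x + c) ^ 2 / (2 * (1 + a * x) ^ 2) ≥
        Real.log (1 + a * x)) :=
  stmt_8_general a c ha hc xb hxb hmax
end

section
/- The ratio of a strictly concave function to a positive affine (linear plus constant) function is strictly pseudo-concave. Concretely: if f : C → ℝ is strictly concave on a convex set C ⊆ ℝ^n and g(x) = aᵀx + b > 0 on C, then f/g is strictly pseudo-concave on C, and hence any stationary point is its unique global maximizer. -/
open Filter Topology

/-- Non-strict first-order condition for concave functions. -/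
lemma concave_le_add_fderiv {n : ℕ} {C : Set (Fin n → ℝ)}
    {f : (Fin n → ℝ) → ℝ} (hf : ConcaveOn ℝ C f)
    {x z : Fin n → ℝ} (hx : x ∈ C) (hz : z ∈ C)
    (hd : DifferentiableAt ℝ f x) :
    f z ≤ f x + fderiv ℝ f x (z - x) := by
  set φ : ℝ → ℝ := fun t => f (x + t • (z - x)) with hφ
  have hline : HasDerivAt (fun t : ℝ => x + t • (z - x)) (z - x) 0 := by
    simpa using ((hasDerivAt_id (0:ℝ)).smul_const (z - x)).const_add x
  have hx0 : x + (0:ℝ) • (z - x) = x := by simp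
  have hdx : HasFDerivAt f (fderiv ℝ f x) (x + (0:ℝ) • (z - x)) := by
    rw [hx0]; exact hd.hasFDerivAt
  have hderiv : HasDerivAt φ (fderiv ℝ f x (z - x)) 0 :=
    hdx.comp_hasDerivAt 0 hline
  have hslope : Tendsto (fun t : ℝ => t⁻¹ * (φ t - φ 0)) (𝓝[>] 0)
      (𝓝 (fderiv ℝ f x (z - x))) := by
    have := hderiv.tendsto_slope_zero_right
    simpa only [zero_add, smul_eq_mul] using this
  have hev : ∀ᶠ t : ℝ in 𝓝[>] 0, f z - f x ≤ t⁻¹ * (φ t - φ 0) := by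
    filter_upwards [Ioo_mem_nhdsGT_of_mem (by norm_num : (0:ℝ) ∈ Set.Ico 0 1)]
      with t ht
    obtain ⟨ht0, ht1⟩ := ht
    have hcomb : (1 - t) * f x + t * f z ≤ f (x + t • (z - x)) := by
      have := hf.2 hx hz (by linarith : (0:ℝ) ≤ 1 - t) (le_of_lt ht0) (by ring)
      have heq : (1 - t) • x + t • z = x + t • (z - x) := by module
      simpa [heq, smul_eq_mul] using this
    rw [← div_eq_inv_mul, le_div_iff₀ ht0]
    simp only [φ, hx0]
    nlinarith
  have := ge_of_tendsto hslope hev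
  linarith

/-- Strict first-order condition for strictly concave functions. -/
lemma strictConcave_lt_add_fderiv {n : ℕ} {C : Set (Fin n → ℝ)}
    {f : (Fin n → ℝ) → ℝ} (hf : StrictConcaveOn ℝ C f)
    {x z : Fin n → ℝ} (hx : x ∈ C) (hz : z ∈ C) (hxz : x ≠ z)
    (hd : DifferentiableAt ℝ f x) :
    f z < f x + fderiv ℝ f x (z - x) := by
  have hmC : (2⁻¹ : ℝ) • x + (2⁻¹ : ℝ) • z ∈ C :=
    hf.1 hx hz (by norm_num : (0:ℝ) ≤ 2⁻¹) (by norm_num : (0:ℝ) ≤ 2⁻¹) (by norm_num)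
  have hmid : (2⁻¹ : ℝ) * f x + (2⁻¹ : ℝ) * f z < f ((2⁻¹ : ℝ) • x + (2⁻¹ : ℝ) • z) := by
    simpa [smul_eq_mul] using
      hf.2 hx hz hxz (by norm_num : (0:ℝ) < 2⁻¹) (by norm_num : (0:ℝ) < 2⁻¹) (by norm_num)
  have hfo : f ((2⁻¹ : ℝ) • x + (2⁻¹ : ℝ) • z)
      ≤ f x + fderiv ℝ f x (((2⁻¹ : ℝ) • x + (2⁻¹ : ℝ) • z) - x) :=
    concave_le_add_fderiv hf.concaveOn hx hmC hd
  have hmx : ((2⁻¹ : ℝ) • x + (2⁻¹ : ℝ) • z) - x = (2⁻¹ : ℝ) • (z - x) := by module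
  rw [hmx, map_smul, smul_eq_mul] at hfo
  linarith

/-- The ratio of a (differentiable) strictly concave function to a positive
affine function is strictly pseudo-concave; hence any stationary point of the
ratio is its unique global maximizer. -/
theorem stmt_9 (n : ℕ) (C : Set (Fin n → ℝ)) (hC : Convex ℝ C)
    (f : (Fin n → ℝ) → ℝ) (hf : StrictConcaveOn ℝ C f)
    (hfd : ∀ x ∈ C, DifferentiableAt ℝ f x)
    (a : Fin n → ℝ) (b : ℝ)
    (hgpos : ∀ x ∈ C, 0 < (∑ i, a i * x i) + b) :
    (∀ x ∈ C, ∀ y ∈ C, x ≠ y →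
      fderiv ℝ (fun z => f z / ((∑ i, a i * z i) + b)) x (y - x) ≤ 0 →
      f y / ((∑ i, a i * y i) + b) < f x / ((∑ i, a i * x i) + b)) ∧
    (∀ xs ∈ C,
      (∀ y ∈ C, fderiv ℝ (fun z => f z / ((∑ i, a i * z i) + b)) xs (y - xs) ≤ 0) →
      ∀ y ∈ C, y ≠ xs →
        f y / ((∑ i, a i * y i) + b) < f xs / ((∑ i, a i * xs i) + b)) := by
  set L : (Fin n → ℝ) →L[ℝ] ℝ :=
    ∑ i, a i • (ContinuousLinearMap.proj i : (Fin n → ℝ) →L[ℝ] ℝ) with hL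
  have hLapp : ∀ v : Fin n → ℝ, L v = ∑ i, a i * v i := by
    intro v
    simp [hL, ContinuousLinearMap.sum_apply]
  set g : (Fin n → ℝ) → ℝ := fun z => (∑ i, a i * z i) + b with hg
  have hgd : ∀ x, HasFDerivAt g L x := by
    intro x
    have h1 : HasFDerivAt (fun z => L z + b) L x := L.hasFDerivAt.add_const b
    apply h1.congr_of_eventuallyEq
    filter_upwards with z using by simp [hg, hLapp]
  have key : ∀ x ∈ C, ∀ y ∈ C, x ≠ y →
      fderiv ℝ (fun z => f z / ((∑ i, a i * z i) + b)) x (y - x) ≤ 0 →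
      f y / ((∑ i, a i * y i) + b) < f x / ((∑ i, a i * x i) + b) := by
    intro x hx y hy hxy hstat
    have hgx : 0 < g x := hgpos x hx
    have hgy : 0 < g y := hgpos y hy
    have hdf := hfd x hx
    -- derivative of the quotient
    have hinv : HasFDerivAt (fun z => (g z)⁻¹) ((-((g x) ^ 2)⁻¹) • L) x :=
      (hasDerivAt_inv (ne_of_gt hgx)).comp_hasFDerivAt x (hgd x)
    have hmul : HasFDerivAt (fun z => f z * (g z)⁻¹)
        (f x • ((-((g x) ^ 2)⁻¹) • L) + (g x)⁻¹ • fderiv ℝ f x) x :=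
      hdf.hasFDerivAt.mul hinv
    have hquot : HasFDerivAt (fun z => f z / ((∑ i, a i * z i) + b))
        (f x • ((-((g x) ^ 2)⁻¹) • L) + (g x)⁻¹ • fderiv ℝ f x) x := by
      apply hmul.congr_of_eventuallyEq
      filter_upwards with z using by simp [div_eq_mul_inv, hg]
    rw [hquot.fderiv] at hstat
    simp only [ContinuousLinearMap.add_apply, ContinuousLinearMap.smul_apply,
      smul_eq_mul, neg_mul] at hstat
    -- hstat : f x * -(((g x)^2)⁻¹ * L (y-x)) + (g x)⁻¹ * fderiv f x (y-x) ≤ 0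
    have hLdiff : L (y - x) = g y - g x := by
      rw [hLapp]
      simp only [hg, Pi.sub_apply]
      rw [show (∑ i, a i * (y i - x i)) = (∑ i, a i * y i) - ∑ i, a i * x i by
        rw [← Finset.sum_sub_distrib]; congr 1; ext i; ring]
      ring
    have hconc : f y < f x + fderiv ℝ f x (y - x) :=
      strictConcave_lt_add_fderiv hf hx hy hxy hdf
    set A := fderiv ℝ f x (y - x) with hA
    rw [hLdiff] at hstat
    have hstat2 : g x * A - f x * (g y - g x) ≤ 0 := by
      have h2 : (0:ℝ) < (g x) ^ 2 := by positivity
      have hgx' : g x ≠ 0 := ne_of_gt hgx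
      have h3 : g x ^ 2 * (f x * -((g x ^ 2)⁻¹ * (g y - g x)) + (g x)⁻¹ * A)
          = g x * A - f x * (g y - g x) := by
        field_simp
        ring
      have h5 := mul_le_mul_of_nonneg_left hstat (le_of_lt h2)
      rw [mul_zero] at h5
      linarith [h3 ▸ h5]
    have hmain : g x * f y < f x * g y := by nlinarith
    rw [show ((∑ i, a i * y i) + b) = g y from rfl,
        show ((∑ i, a i * x i) + b) = g x from rfl,
        div_lt_div_iff₀ hgy hgx]
    linarith
  refine ⟨key, fun xs hxs hstat y hy hyxs => ?_⟩
  exact key xs hxs y hy (Ne.symm hyxs) (hstat y hy)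
end

section
/- The function I_m(p) defined as the right-hand side of the GEE per-subcarrier fixed-point equation, I_m(p) = α_m B / (γ_m π ln 2 + B Σ_{j≠m} α_j G_{m,j} / (1 + Σ_{ℓ≠j} p_ℓ G_{ℓ,j})), is a standard interference function of p = (p_1,…,p_M) ∈ ℝ_{≥0}^M: it is positive, monotone (p ≤ p' implies I_m(p) ≤ I_m(p')), and scalable (for μ > 1, μ·I_m(p) > I_m(μp)), where all α_j ≥ 0 with α_m > 0, all G's > 0, π > 0, γ_m ≥ 1, B > 0. -/
/-- The right-hand side of the GEE per-subcarrier fixed-point equation is a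
standard interference function: positive, monotone, and scalable on the
nonnegative orthant. -/
theorem stmt_12 (M : ℕ) (m : Fin M) (B π γm : ℝ) (α : Fin M → ℝ)
    (G : Fin M → Fin M → ℝ)
    (hB : 0 < B) (hπ : 0 < π) (hγ : 1 ≤ γm)
    (hα : ∀ j, 0 ≤ α j) (hαm : 0 < α m) (hG : ∀ ℓ j, 0 < G ℓ j) :
    (∀ p : Fin M → ℝ, (∀ ℓ, 0 ≤ p ℓ) →
      0 < α m * B / (γm * π * Real.log 2 +
        B * ∑ j ∈ Finset.univ.erase m,
          α j * G m j / (1 + ∑ ℓ ∈ Finset.univ.erase j, p ℓ * G ℓ j))) ∧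
    (∀ p p' : Fin M → ℝ, (∀ ℓ, 0 ≤ p ℓ) → (∀ ℓ, p ℓ ≤ p' ℓ) →
      α m * B / (γm * π * Real.log 2 +
        B * ∑ j ∈ Finset.univ.erase m,
          α j * G m j / (1 + ∑ ℓ ∈ Finset.univ.erase j, p ℓ * G ℓ j)) ≤
      α m * B / (γm * π * Real.log 2 +
        B * ∑ j ∈ Finset.univ.erase m,
          α j * G m j / (1 + ∑ ℓ ∈ Finset.univ.erase j, p' ℓ * G ℓ j))) ∧
    (∀ p : Fin M → ℝ, (∀ ℓ, 0 ≤ p ℓ) → ∀ μ : ℝ, 1 < μ →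
      α m * B / (γm * π * Real.log 2 +
        B * ∑ j ∈ Finset.univ.erase m,
          α j * G m j / (1 + ∑ ℓ ∈ Finset.univ.erase j, (μ * p ℓ) * G ℓ j)) <
      μ * (α m * B / (γm * π * Real.log 2 +
        B * ∑ j ∈ Finset.univ.erase m,
          α j * G m j / (1 + ∑ ℓ ∈ Finset.univ.erase j, p ℓ * G ℓ j)))) := by
  have hln2 : 0 < Real.log 2 := Real.log_pos (by norm_num)
  have hγ0 : 0 < γm := lt_of_lt_of_le one_pos hγ
  have hc : 0 < γm * π * Real.log 2 := by positivity
  have hA : 0 < α m * B := mul_pos hαm hB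
  -- inner denominator positivity
  have hd : ∀ (p : Fin M → ℝ), (∀ ℓ, 0 ≤ p ℓ) → ∀ j,
      0 < 1 + ∑ ℓ ∈ Finset.univ.erase j, p ℓ * G ℓ j := by
    intro p hp j
    have : 0 ≤ ∑ ℓ ∈ Finset.univ.erase j, p ℓ * G ℓ j :=
      Finset.sum_nonneg fun ℓ _ => mul_nonneg (hp ℓ) (hG ℓ j).le
    linarith
  -- outer sum nonnegativity
  have hS : ∀ (p : Fin M → ℝ), (∀ ℓ, 0 ≤ p ℓ) →
      0 ≤ ∑ j ∈ Finset.univ.erase m,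
        α j * G m j / (1 + ∑ ℓ ∈ Finset.univ.erase j, p ℓ * G ℓ j) := by
    intro p hp
    exact Finset.sum_nonneg fun j _ =>
      div_nonneg (mul_nonneg (hα j) (hG m j).le) (hd p hp j).le
  -- outer denominator positivity
  have hD : ∀ (p : Fin M → ℝ), (∀ ℓ, 0 ≤ p ℓ) →
      0 < γm * π * Real.log 2 +
        B * ∑ j ∈ Finset.univ.erase m,
          α j * G m j / (1 + ∑ ℓ ∈ Finset.univ.erase j, p ℓ * G ℓ j) := by
    intro p hp
    have := mul_nonneg hB.le (hS p hp)
    linarith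
  refine ⟨fun p hp => div_pos hA (hD p hp), ?_, ?_⟩
  · -- monotonicity
    intro p p' hp hpp'
    have hp' : ∀ ℓ, 0 ≤ p' ℓ := fun ℓ => (hp ℓ).trans (hpp' ℓ)
    have hSle : (∑ j ∈ Finset.univ.erase m,
          α j * G m j / (1 + ∑ ℓ ∈ Finset.univ.erase j, p' ℓ * G ℓ j)) ≤
        ∑ j ∈ Finset.univ.erase m,
          α j * G m j / (1 + ∑ ℓ ∈ Finset.univ.erase j, p ℓ * G ℓ j) := by
      refine Finset.sum_le_sum fun j _ => ?_
      refine div_le_div_of_nonneg_left (mul_nonneg (hα j) (hG m j).le)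
        (hd p hp j) ?_
      have : (∑ ℓ ∈ Finset.univ.erase j, p ℓ * G ℓ j) ≤
          ∑ ℓ ∈ Finset.univ.erase j, p' ℓ * G ℓ j :=
        Finset.sum_le_sum fun ℓ _ =>
          mul_le_mul_of_nonneg_right (hpp' ℓ) (hG ℓ j).le
      linarith
    exact div_le_div_of_nonneg_left hA.le (hD p' hp')
      (by have := mul_le_mul_of_nonneg_left hSle hB.le; linarith)
  · -- scalability
    intro p hp μ hμ
    have hμ0 : 0 < μ := lt_trans one_pos hμ
    have hμp : ∀ ℓ, 0 ≤ μ * p ℓ := fun ℓ => mul_nonneg hμ0.le (hp ℓ)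
    -- per-term: S(p) ≤ μ * S(μp)
    have hterm : ∀ j, α j * G m j / (1 + ∑ ℓ ∈ Finset.univ.erase j, p ℓ * G ℓ j) ≤
        μ * (α j * G m j / (1 + ∑ ℓ ∈ Finset.univ.erase j, (μ * p ℓ) * G ℓ j)) := by
      intro j
      have hsum : (∑ ℓ ∈ Finset.univ.erase j, (μ * p ℓ) * G ℓ j) =
          μ * ∑ ℓ ∈ Finset.univ.erase j, p ℓ * G ℓ j := by
        rw [Finset.mul_sum]; exact Finset.sum_congr rfl fun ℓ _ => by ring
      have hdle : 1 + ∑ ℓ ∈ Finset.univ.erase j, (μ * p ℓ) * G ℓ j ≤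
          μ * (1 + ∑ ℓ ∈ Finset.univ.erase j, p ℓ * G ℓ j) := by
        rw [hsum]; nlinarith [Finset.sum_nonneg
          (fun ℓ (_ : ℓ ∈ Finset.univ.erase j) => mul_nonneg (hp ℓ) (hG ℓ j).le)]
      rw [mul_div_assoc']
      calc α j * G m j / (1 + ∑ ℓ ∈ Finset.univ.erase j, p ℓ * G ℓ j)
          = μ * (α j * G m j) / (μ * (1 + ∑ ℓ ∈ Finset.univ.erase j, p ℓ * G ℓ j)) := by
            rw [mul_div_mul_left _ _ (ne_of_gt hμ0)]
        _ ≤ μ * (α j * G m j) / (1 + ∑ ℓ ∈ Finset.univ.erase j, (μ * p ℓ) * G ℓ j) :=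
            div_le_div_of_nonneg_left (mul_nonneg hμ0.le (mul_nonneg (hα j) (hG m j).le)) (hd _ hμp j) hdle
    have hSle : (∑ j ∈ Finset.univ.erase m,
          α j * G m j / (1 + ∑ ℓ ∈ Finset.univ.erase j, p ℓ * G ℓ j)) ≤
        μ * ∑ j ∈ Finset.univ.erase m,
          α j * G m j / (1 + ∑ ℓ ∈ Finset.univ.erase j, (μ * p ℓ) * G ℓ j) := by
      rw [Finset.mul_sum]
      exact Finset.sum_le_sum fun j _ => hterm j
    -- D(p) < μ * D(μp)
    have hkey : (γm * π * Real.log 2 +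
        B * ∑ j ∈ Finset.univ.erase m,
          α j * G m j / (1 + ∑ ℓ ∈ Finset.univ.erase j, p ℓ * G ℓ j)) <
        μ * (γm * π * Real.log 2 +
        B * ∑ j ∈ Finset.univ.erase m,
          α j * G m j / (1 + ∑ ℓ ∈ Finset.univ.erase j, (μ * p ℓ) * G ℓ j)) := by
      have h1 := mul_le_mul_of_nonneg_left hSle hB.le
      have h2 : γm * π * Real.log 2 < μ * (γm * π * Real.log 2) := by
        nlinarith
      nlinarith
    rw [mul_div_assoc', div_lt_div_iff₀ (hD _ hμp) (hD p hp)]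
    nlinarith [hD _ hμp, hD p hp]
end

section
/- If I : ℝ_{≥0}^M → ℝ_{>0}^M is a standard interference function (positive, monotone, scalable) and P ∈ ℝ_{>0}^M, then the constrained map Î(p) = min{P, I(p)} (componentwise) is also a standard interference function; consequently the iteration p^{t+1} = Î(p^t) converges to the unique fixed point of Î from any starting point in [0, P]. -/
/-!
The constrained map inherits the three axioms, the scaling one because
`μ * min (P m) (I p m) = min (μ * P m) (μ * I p m)`. For any standard interference function `J`
on a finite index set, monotonicity and scalability give `J p < μ * J q` whenever `p ≤ μ • q`
with `μ > 1`. Applied at a coordinate maximising `p / q`, this shows that a fixed point is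
unique; applied to `μ⁻¹ • q ≤ p ≤ μ • q`, it shows that `J` is continuous at positive vectors.
If `J P ≤ P`, the iterates from `P` decrease and those from `0` increase; both converge, their
limits are at least `J 0 > 0`, hence fixed points by continuity, hence equal, and every orbit
starting in `[0, P]` is squeezed between the two.
-/

open Filter Topology Function

theorem Icc_inv_smul_smul_mem_nhds {ι : Type*} [Finite ι] {q : ι → ℝ} {μ : ℝ}
    (hq : ∀ m, 0 < q m) (hμ : 1 < μ) : Set.Icc (μ⁻¹ • q) (μ • q) ∈ 𝓝 q :=
  pi_Icc_mem_nhds (fun m => mul_lt_of_lt_one_left (hq m) (inv_lt_one_of_one_lt₀ hμ))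
    fun m => lt_mul_left (hq m) hμ

theorem exists_one_lt_mul_lt {a c : ℝ} (h : a < c) : ∃ μ : ℝ, 1 < μ ∧ a * μ < c := by
  have : ∀ᶠ μ in 𝓝 (1 : ℝ), a * μ < c :=
    (tendsto_const_nhds.mul tendsto_id).eventually (gt_mem_nhds (by simpa using h))
  obtain ⟨μ, hμc, hμ⟩ := ((this.filter_mono nhdsWithin_le_nhds).and
    (self_mem_nhdsWithin : Set.Ioi (1 : ℝ) ∈ 𝓝[>] 1)).exists
  exact ⟨μ, hμ, hμc⟩

/-- Yates' axioms, imposed on the nonnegative orthant only. -/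
structure IsStandardInterference {ι : Type*} (J : (ι → ℝ) → ι → ℝ) : Prop where
  pos : ∀ p, 0 ≤ p → ∀ m, 0 < J p m
  mono : ∀ p q, 0 ≤ p → p ≤ q → J p ≤ J q
  scale : ∀ p, 0 ≤ p → ∀ μ : ℝ, 1 < μ → ∀ m, J (μ • p) m < μ * J p m

namespace IsStandardInterference

variable {ι : Type*} {J : (ι → ℝ) → ι → ℝ} {p q : ι → ℝ} {μ : ℝ}

theorem min_const (hJ : IsStandardInterference J) {P : ι → ℝ} (hP : ∀ m, 0 < P m) :
    IsStandardInterference fun p m => min (P m) (J p m) where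
  pos p hp m := lt_min (hP m) (hJ.pos p hp m)
  mono p q hp hpq m := min_le_min le_rfl (hJ.mono p q hp hpq m)
  scale p hp μ hμ m := by
    rw [mul_min_of_nonneg _ _ (by linarith : (0 : ℝ) ≤ μ)]
    exact lt_min ((min_le_left _ _).trans_lt (lt_mul_left (hP m) hμ))
      ((min_le_right _ _).trans_lt (hJ.scale p hp μ hμ m))

theorem apply_lt_of_le_smul (hJ : IsStandardInterference J) (hp : 0 ≤ p) (hq : 0 ≤ q)
    (hμ : 1 < μ) (hpq : p ≤ μ • q) (m : ι) : J p m < μ * J q m :=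
  (hJ.mono p _ hp hpq m).trans_lt (hJ.scale q hq μ hμ m)

theorem apply_lt_of_inv_smul_le (hJ : IsStandardInterference J) (hq : 0 ≤ q)
    (hμ : 1 < μ) (hqp : μ⁻¹ • q ≤ p) (m : ι) : J q m < μ * J p m := by
  have hq' : 0 ≤ μ⁻¹ • q := smul_nonneg (by positivity) hq
  have h := hJ.scale _ hq' μ hμ m
  rw [smul_inv_smul₀ (by positivity : μ ≠ 0)] at h
  exact h.trans_le (mul_le_mul_of_nonneg_left (hJ.mono _ p hq' hqp m) (by positivity))

theorem apply_nonneg (hJ : IsStandardInterference J) (hp : 0 ≤ p) : 0 ≤ J p :=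
  fun m => (hJ.pos p hp m).le

theorem iterate_nonneg (hJ : IsStandardInterference J) (hp : 0 ≤ p) (n : ℕ) : 0 ≤ J^[n] p := by
  induction n generalizing p with
  | zero => exact hp
  | succ n ih => exact ih (hJ.apply_nonneg hp)

theorem iterate_mono (hJ : IsStandardInterference J) (hp : 0 ≤ p) (hpq : p ≤ q) (n : ℕ) :
    J^[n] p ≤ J^[n] q := by
  induction n generalizing p q with
  | zero => exact hpq
  | succ n ih => exact ih (hJ.apply_nonneg hp) (hJ.mono p q hp hpq)

theorem pos_of_isFixedPt (hJ : IsStandardInterference J) (hp : 0 ≤ p) (h : IsFixedPt J p)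
    (m : ι) : 0 < p m :=
  h ▸ hJ.pos p hp m

variable [Finite ι]

theorem le_of_isFixedPt (hJ : IsStandardInterference J) (hp : 0 ≤ p) (hq : 0 ≤ q)
    (hpf : IsFixedPt J p) (hqf : IsFixedPt J q) : p ≤ q := by
  intro m
  by_contra! hm
  have : Nonempty ι := ⟨m⟩
  obtain ⟨k, hk⟩ := Finite.exists_max fun ℓ => p ℓ / q ℓ
  have hq0 := hJ.pos_of_isFixedPt hq hqf
  have hμ : 1 < p k / q k := ((one_lt_div (hq0 m)).2 hm).trans_le (hk m)
  have hle : p ≤ (p k / q k) • q := fun ℓ => (div_le_iff₀ (hq0 ℓ)).1 (hk ℓ)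
  have := hJ.apply_lt_of_le_smul hp hq hμ hle k
  rw [hpf.eq, hqf.eq, div_mul_cancel₀ _ (hq0 k).ne'] at this
  exact this.false

theorem eq_of_isFixedPt (hJ : IsStandardInterference J) (hp : 0 ≤ p) (hq : 0 ≤ q)
    (hpf : IsFixedPt J p) (hqf : IsFixedPt J q) : p = q :=
  le_antisymm (hJ.le_of_isFixedPt hp hq hpf hqf) (hJ.le_of_isFixedPt hq hp hqf hpf)

theorem continuousAt (hJ : IsStandardInterference J) (hq : ∀ m, 0 < q m) : ContinuousAt J q := by
  have hq0 : 0 ≤ q := fun m => (hq m).le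
  refine tendsto_pi_nhds.2 fun m => tendsto_order.2 ⟨fun a ha => ?_, fun b hb => ?_⟩
  · obtain ⟨μ, hμ, haμ⟩ := exists_one_lt_mul_lt ha
    filter_upwards [Icc_inv_smul_smul_mem_nhds hq hμ] with p ⟨hlo, _⟩
    have := hJ.apply_lt_of_inv_smul_le hq0 hμ hlo m
    exact lt_of_mul_lt_mul_left (by linarith : μ * a < μ * J p m) (by positivity)
  · have hc := hJ.pos q hq0 m
    have hμ : 1 < b / J q m := (one_lt_div hc).2 hb
    filter_upwards [Icc_inv_smul_smul_mem_nhds hq hμ] with p ⟨hlo, hhi⟩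
    have hp : 0 ≤ p := (smul_nonneg (by positivity) hq0).trans hlo
    simpa [div_mul_cancel₀ _ hc.ne'] using hJ.apply_lt_of_le_smul hp hq0 hμ hhi m

theorem isFixedPt_of_tendsto_iterate_of_le (hJ : IsStandardInterference J) {x : ι → ℝ}
    (hx : Tendsto (fun n => J^[n] p) atTop (𝓝 x)) (hJx : J 0 ≤ x) : IsFixedPt J x :=
  isFixedPt_of_tendsto_iterate hx (hJ.continuousAt fun m => (hJ.pos 0 le_rfl m).trans_le (hJx m))

theorem exists_isFixedPt_tendsto_iterate (hJ : IsStandardInterference J) {P : ι → ℝ}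
    (hP0 : 0 ≤ P) (hP : J P ≤ P) :
    ∃ x, 0 ≤ x ∧ IsFixedPt J x ∧
      ∀ p, 0 ≤ p → p ≤ P → Tendsto (fun n => J^[n] p) atTop (𝓝 x) := by
  have hJ0 : 0 ≤ J 0 := hJ.apply_nonneg le_rfl
  have hanti : Antitone fun n => J^[n] P := antitone_nat_of_succ_le fun n => by
    rw [iterate_succ_apply]; exact hJ.iterate_mono (hJ.apply_nonneg hP0) hP n
  have hmono : Monotone fun n => J^[n] 0 := monotone_nat_of_le_succ fun n => by
    rw [iterate_succ_apply]; exact hJ.iterate_mono le_rfl hJ0 n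
  have hbelow : BddBelow (Set.range fun n => J^[n] P) :=
    ⟨0, by rintro _ ⟨n, rfl⟩; exact hJ.iterate_nonneg hP0 n⟩
  have habove : BddAbove (Set.range fun n => J^[n] 0) :=
    ⟨P, by rintro _ ⟨n, rfl⟩; exact (hJ.iterate_mono le_rfl hP0 n).trans (hanti n.zero_le)⟩
  have hupper := tendsto_atTop_ciInf hanti hbelow
  have hlower := tendsto_atTop_ciSup hmono habove
  have hJ0_le_inf : J 0 ≤ ⨅ n, J^[n] P := le_ciInf fun n => by
    calc J 0 ≤ J (J^[n] P) := hJ.mono _ _ le_rfl (hJ.iterate_nonneg hP0 n)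
      _ = J^[n + 1] P := (iterate_succ_apply' J n P).symm
      _ ≤ J^[n] P := hanti n.le_succ
  have hJ0_le_sup : J 0 ≤ ⨆ n, J^[n] 0 := le_ciSup habove 1
  have hinf_fixed := hJ.isFixedPt_of_tendsto_iterate_of_le hupper hJ0_le_inf
  have hsup_fixed := hJ.isFixedPt_of_tendsto_iterate_of_le hlower hJ0_le_sup
  have hinf0 := hJ0.trans hJ0_le_inf
  have hsup_eq : ⨆ n, J^[n] 0 = ⨅ n, J^[n] P :=
    hJ.eq_of_isFixedPt (hJ0.trans hJ0_le_sup) hinf0 hsup_fixed hinf_fixed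
  refine ⟨_, hinf0, hinf_fixed, fun p hp hpP => tendsto_pi_nhds.2 fun m => ?_⟩
  rw [hsup_eq] at hlower
  exact tendsto_of_tendsto_of_tendsto_of_le_of_le (tendsto_pi_nhds.1 hlower m)
    (tendsto_pi_nhds.1 hupper m) (fun n => hJ.iterate_mono le_rfl hp n m)
    fun n => hJ.iterate_mono hp hpP n m

end IsStandardInterference

/-- If `I` is a standard interference function (positive, monotone, scalable)
and `P > 0` componentwise, then the constrained map `Î(p) = min{P, I(p)}` is
also a standard interference function, and the iteration `p ← Î(p)` converges
to the unique fixed point of `Î` from any starting point in `[0, P]`. -/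
theorem stmt_13 (M : ℕ) (I : (Fin M → ℝ) → (Fin M → ℝ)) (P : Fin M → ℝ)
    (hP : ∀ m, 0 < P m)
    (hpos : ∀ p : Fin M → ℝ, (∀ m, 0 ≤ p m) → ∀ m, 0 < I p m)
    (hmono : ∀ p p' : Fin M → ℝ, (∀ m, 0 ≤ p m) → (∀ m, p m ≤ p' m) →
      ∀ m, I p m ≤ I p' m)
    (hscale : ∀ p : Fin M → ℝ, (∀ m, 0 ≤ p m) → ∀ μ : ℝ, 1 < μ →
      ∀ m, I (fun ℓ => μ * p ℓ) m < μ * I p m) :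
    (∀ p : Fin M → ℝ, (∀ m, 0 ≤ p m) → ∀ m, 0 < min (P m) (I p m)) ∧
    (∀ p p' : Fin M → ℝ, (∀ m, 0 ≤ p m) → (∀ m, p m ≤ p' m) →
      ∀ m, min (P m) (I p m) ≤ min (P m) (I p' m)) ∧
    (∀ p : Fin M → ℝ, (∀ m, 0 ≤ p m) → ∀ μ : ℝ, 1 < μ →
      ∀ m, min (P m) (I (fun ℓ => μ * p ℓ) m) < μ * min (P m) (I p m)) ∧
    (∃ pf : Fin M → ℝ, (∀ m, 0 ≤ pf m) ∧
      (fun m => min (P m) (I pf m)) = pf ∧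
      (∀ p' : Fin M → ℝ, (∀ m, 0 ≤ p' m) →
        (fun m => min (P m) (I p' m)) = p' → p' = pf) ∧
      (∀ p₀ : Fin M → ℝ, (∀ m, 0 ≤ p₀ m ∧ p₀ m ≤ P m) →
        Filter.Tendsto
          (fun t : ℕ => (fun p : Fin M → ℝ => fun m => min (P m) (I p m))^[t] p₀)
          Filter.atTop (nhds pf))) := by
  have hI : IsStandardInterference I := ⟨hpos, hmono, hscale⟩
  have hJ := hI.min_const hP
  obtain ⟨pf, hpf, hfixed, htendsto⟩ :=
    hJ.exists_isFixedPt_tendsto_iterate (fun m => (hP m).le) fun m => min_le_left _ _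
  exact ⟨hJ.pos, hJ.mono, hJ.scale, pf, hpf, hfixed,
    fun p hp hpfixed => hJ.eq_of_isFixedPt hp hpf hpfixed hfixed,
    fun p₀ hp₀ => htendsto p₀ (fun m => (hp₀ m).1) fun m => (hp₀ m).2⟩
end

section
/- Let x̄_n be the unique maximizer on [0,∞) of u_n(x) = w_n log₂(1 + a_n x)/(x + c_n) (with w_n > 0, a_n > 0, c_n > 0) for n = 1,…,N. Then the problem of maximizing Σ_n u_n(x_n) subject to Σ_n x_n ≤ P and 0 ≤ x_n for all n is equivalent to (has the same optimal value and an optimal solution in common with) the concave problem of maximizing Σ_n u_n(x_n) subject to Σ_n x_n ≤ P and 0 ≤ x_n ≤ x̄_n for all n. -/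
/-- Noise-limited Sum-EE: clipping each variable at the unique unconstrained
maximizer `x̄_n` of `u_n(x) = w_n log₂(1+a_n x)/(x+c_n)` does not change the
optimal value, i.e. the problem over `{x ≥ 0, Σ x ≤ P}` and the (concave)
problem over `{0 ≤ x ≤ x̄, Σ x ≤ P}` have the same optimal value and share an
optimal solution. -/
theorem stmt_17 (N : ℕ) (w a c : Fin N → ℝ)
    (hw : ∀ n, 0 < w n) (ha : ∀ n, 0 < a n) (hc : ∀ n, 0 < c n)
    (P : ℝ) (hP : 0 < P)
    (xb : Fin N → ℝ) (hxb : ∀ n, xb n ∈ Set.Ici (0 : ℝ))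
    (hmax : ∀ n, IsMaxOn (fun x => w n * Real.logb 2 (1 + a n * x) / (x + c n))
      (Set.Ici 0) (xb n))
    (huniq : ∀ n, ∀ y ∈ Set.Ici (0 : ℝ),
      IsMaxOn (fun x => w n * Real.logb 2 (1 + a n * x) / (x + c n))
        (Set.Ici 0) y → y = xb n) :
    (∃ x : Fin N → ℝ,
      x ∈ {y : Fin N → ℝ | (∀ n, 0 ≤ y n ∧ y n ≤ xb n) ∧ ∑ n, y n ≤ P} ∧
      IsMaxOn (fun y : Fin N → ℝ =>
          ∑ n, w n * Real.logb 2 (1 + a n * y n) / (y n + c n))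
        {y : Fin N → ℝ | (∀ n, 0 ≤ y n) ∧ ∑ n, y n ≤ P} x ∧
      IsMaxOn (fun y : Fin N → ℝ =>
          ∑ n, w n * Real.logb 2 (1 + a n * y n) / (y n + c n))
        {y : Fin N → ℝ | (∀ n, 0 ≤ y n ∧ y n ≤ xb n) ∧ ∑ n, y n ≤ P} x) ∧
    sSup ((fun y : Fin N → ℝ =>
        ∑ n, w n * Real.logb 2 (1 + a n * y n) / (y n + c n)) ''
      {y : Fin N → ℝ | (∀ n, 0 ≤ y n) ∧ ∑ n, y n ≤ P}) =
    sSup ((fun y : Fin N → ℝ =>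
        ∑ n, w n * Real.logb 2 (1 + a n * y n) / (y n + c n)) ''
      {y : Fin N → ℝ | (∀ n, 0 ≤ y n ∧ y n ≤ xb n) ∧ ∑ n, y n ≤ P}) := by
  classical
  set f : (Fin N → ℝ) → ℝ :=
    fun y => ∑ n, w n * Real.logb 2 (1 + a n * y n) / (y n + c n) with hfdef
  set S : Set (Fin N → ℝ) := {y | (∀ n, 0 ≤ y n ∧ y n ≤ xb n) ∧ ∑ n, y n ≤ P} with hSdef
  set T : Set (Fin N → ℝ) := {y | (∀ n, 0 ≤ y n) ∧ ∑ n, y n ≤ P} with hTdef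
  have hST : S ⊆ T := fun y hy => ⟨fun n => (hy.1 n).1, hy.2⟩
  have h0S : (0 : Fin N → ℝ) ∈ S :=
    ⟨fun n => ⟨le_refl _, hxb n⟩, by simp [hP.le]⟩
  -- compactness of S
  have hSeq : S = Set.pi Set.univ (fun n => Set.Icc (0:ℝ) (xb n)) ∩
      {y : Fin N → ℝ | ∑ n, y n ≤ P} := by
    ext y
    constructor
    · rintro ⟨h1, h2⟩
      exact ⟨fun n _ => ⟨(h1 n).1, (h1 n).2⟩, h2⟩
    · rintro ⟨h1, h2⟩
      exact ⟨fun n => h1 n (Set.mem_univ n), h2⟩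
  have hcomp : IsCompact S := by
    rw [hSeq]
    exact (isCompact_univ_pi (fun n => isCompact_Icc)).inter_right
      (isClosed_le (continuous_finset_sum _ fun n _ => continuous_apply n) continuous_const)
  -- continuity of f on S
  have hcont : ContinuousOn f S := by
    apply continuousOn_finset_sum
    intro n _
    intro y hy
    have hy0 : 0 ≤ y n := (hy.1 n).1
    have h1 : (1 : ℝ) + a n * y n ≠ 0 := by nlinarith [ha n, hc n]
    have h2 : y n + c n ≠ 0 := by nlinarith [hc n]
    apply ContinuousAt.continuousWithinAt
    have hinner : ContinuousAt (fun y : Fin N → ℝ => 1 + a n * y n) y :=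
      continuousAt_const.add (continuousAt_const.mul (continuous_apply n).continuousAt)
    have hlog : ContinuousAt (fun y : Fin N → ℝ => Real.logb 2 (1 + a n * y n)) y := by
      exact ContinuousAt.comp (g := Real.logb 2)
        (f := fun y : Fin N → ℝ => 1 + a n * y n) (Real.continuousAt_logb h1) hinner
    exact (continuousAt_const.mul hlog).div
      ((continuous_apply n).continuousAt.add continuousAt_const) h2
  obtain ⟨x, hxS, hxmax⟩ := hcomp.exists_isMaxOn ⟨0, h0S⟩ hcont
  -- x is also optimal over T
  have hxmaxT : IsMaxOn f T x := by
    intro y hy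
    set z : Fin N → ℝ := fun n => min (y n) (xb n) with hz
    have hzS : z ∈ S := by
      refine ⟨fun n => ⟨le_min (hy.1 n) (hxb n), min_le_right _ _⟩, ?_⟩
      calc ∑ n, z n ≤ ∑ n, y n := Finset.sum_le_sum (fun n _ => min_le_left _ _)
        _ ≤ P := hy.2
    have hfy : f y ≤ f z := by
      apply Finset.sum_le_sum
      intro n _
      rcases le_total (y n) (xb n) with h | h
      · simp [hz, min_eq_left h]
      · have := hmax n (hy.1 n : y n ∈ Set.Ici (0:ℝ))
        simpa [hz, min_eq_right h] using this
    exact le_trans hfy (hxmax hzS)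
  refine ⟨⟨x, hxS, hxmaxT, hxmax⟩, ?_⟩
  have hTne : f 0 ∈ f '' T := ⟨0, hST h0S, rfl⟩
  have hSne : f x ∈ f '' S := ⟨x, hxS, rfl⟩
  have h1 : sSup (f '' T) = f x := by
    apply le_antisymm
    · exact csSup_le ⟨f 0, hTne⟩ (by rintro b ⟨y, hy, rfl⟩; exact hxmaxT hy)
    · exact le_csSup ⟨f x, by rintro b ⟨y, hy, rfl⟩; exact hxmaxT hy⟩ ⟨x, hST hxS, rfl⟩
  have h2 : sSup (f '' S) = f x := by
    apply le_antisymm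
    · exact csSup_le ⟨f x, hSne⟩ (by rintro b ⟨y, hy, rfl⟩; exact hxmax hy)
    · exact le_csSup ⟨f x, by rintro b ⟨y, hy, rfl⟩; exact hxmax hy⟩ hSne
  rw [h1, h2]
end
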